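/- Let B = conv((B²₂ × {0}) ∪ {(0,0,±1)}) ⊂ ℝ³ and let S be the tetrahedron conv({0, v_1, v_2, v_3}) where v_i are the vertices of T* = (1/√3)·T + (0,0,(√3-1)/√3), with T the equilateral Euclidean triangle with vertices (±√3/2, -1/2, 0) and (0,1,0). Then no set of the form λ·S + x with λ > 0 and x ∈ ℝ³ is inscribed in B, i.e., there is no positive homothety of S all of whose four vertices lie on ∂B. -/

import Mathlib

open Set

/-- The Euclidean unit disk in the horizontal plane of `ℝ³`. -/
def diskSet : Set (Fin 3 → ℝ) := {p | p 0 ^ 2 + p 1 ^ 2 ≤ 1 ∧ p 2 = 0}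

/-- The double cone over the Euclidean unit disk with apexes `(0,0,±1)`. -/
def Bcone : Set (Fin 3 → ℝ) :=
  convexHull ℝ (diskSet ∪ ({![0, 0, 1], ![0, 0, -1]} : Set (Fin 3 → ℝ)))

/-- Vertices of the equilateral triangle `T` in the horizontal plane. -/
noncomputable def vT : Fin 3 → (Fin 3 → ℝ) :=
  ![![Real.sqrt 3 / 2, -(1 / 2 : ℝ), 0], ![-(Real.sqrt 3 / 2), -(1 / 2 : ℝ), 0], ![0, 1, 0]]

/-- Vertices of the triangle `T⋆ = (1/√3)·T + (0,0,(√3-1)/√3)`. -/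
noncomputable def wT : Fin 3 → (Fin 3 → ℝ) :=
  fun i => (1 / Real.sqrt 3) • vT i + ![0, 0, (Real.sqrt 3 - 1) / Real.sqrt 3]

/-!
The gauge of `B` is `‖(p₀, p₁)‖₂ + |p₂|`. The three vertices of `λ·T⋆ + x` have the same height,
so their horizontal parts have equal Euclidean norms; since they form an equilateral triangle
centred at the horizontal part of `x`, that part must vanish. Then the apex `x` of the
tetrahedron is `(0, 0, ±1)`, and with `c = λ/√3` the boundary condition on the triangle becomes
`c + |±1 + (√3 - 1) c| = 1`, which has no solution `c > 0`.
-/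

theorem Seminorm.gauge_closedBall_one {E : Type*} [AddCommGroup E] [Module ℝ E]
    (p : Seminorm ℝ E) : gauge (p.closedBall 0 1) = p := by
  have hball := p.absorbent_ball_zero one_pos
  have hsub := p.ball_subset_closedBall 0 1
  refine le_antisymm (fun x => ?_) (fun x => ?_)
  · rw [← p.gauge_ball]
    exact gauge_mono hball hsub x
  · by_contra! h
    obtain ⟨b, hb, hbx, y, hy, rfl⟩ := exists_lt_of_gauge_lt (hball.mono hsub) h
    rw [p.mem_closedBall_zero] at hy
    rw [map_smul_eq_mul, Real.norm_eq_abs, abs_of_pos hb] at hbx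
    nlinarith

noncomputable def coneSeminorm : Seminorm ℝ (Fin 3 → ℝ) :=
  (normSeminorm ℝ (EuclideanSpace ℝ (Fin 2))).comp
      ((EuclideanSpace.equiv (Fin 2) ℝ).symm.toLinearMap ∘ₗ LinearMap.funLeft ℝ ℝ Fin.castSucc) +
    (normSeminorm ℝ ℝ).comp (LinearMap.proj 2)

theorem coneSeminorm_apply (p : Fin 3 → ℝ) :
    coneSeminorm p = √(p 0 ^ 2 + p 1 ^ 2) + |p 2| := by
  simp [coneSeminorm, EuclideanSpace.norm_eq, Fin.sum_univ_two, LinearMap.funLeft]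

theorem closedBall_coneSeminorm_subset_Bcone : coneSeminorm.closedBall 0 1 ⊆ Bcone := by
  intro p hp
  rw [Seminorm.mem_closedBall_zero, coneSeminorm_apply] at hp
  set t := |p 2| with ht
  have hr : p 0 ^ 2 + p 1 ^ 2 ≤ (1 - t) ^ 2 := (Real.sqrt_le_iff.mp (by linarith)).2
  have ht1 : t ≤ 1 := by linarith [Real.sqrt_nonneg (p 0 ^ 2 + p 1 ^ 2)]
  have hapex : 1 - t = 0 → p 0 = 0 ∧ p 1 = 0 := fun h => by
    rw [h] at hr
    constructor <;> nlinarith [sq_nonneg (p 0), sq_nonneg (p 1)]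
  -- `p` lies on the segment from a point `d` of the disk to an apex `a`; when `t = 1` the
  -- division by zero gives `d = 0`, which is harmless since `d` then has weight zero.
  set d : Fin 3 → ℝ := ![p 0 / (1 - t), p 1 / (1 - t), 0]
  set a : Fin 3 → ℝ := ![0, 0, if 0 ≤ p 2 then 1 else -1]
  have hd : d ∈ diskSet := by
    refine ⟨?_, rfl⟩
    simp only [d, Matrix.cons_val_zero, Matrix.cons_val_one, div_pow, ← add_div]
    exact div_le_one_of_le₀ hr (sq_nonneg _)
  have ha : a ∈ ({![0, 0, 1], ![0, 0, -1]} : Set (Fin 3 → ℝ)) := by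
    simp only [a]
    split_ifs <;> simp
  have hp_eq : p = (1 - t) • d + t • a := by
    ext j
    fin_cases j
    · simp [d, a, mul_div_cancel_of_imp' fun h => (hapex h).1]
    · simp [d, a, mul_div_cancel_of_imp' fun h => (hapex h).2]
    · simp only [d, a, ht]
      split_ifs with h
      · simp [abs_of_nonneg h]
      · simp [abs_of_neg (not_le.mp h)]
  rw [hp_eq]
  exact (convex_convexHull ℝ _) (subset_convexHull ℝ _ (mem_union_left _ hd))
    (subset_convexHull ℝ _ (mem_union_right _ ha)) (by linarith) (abs_nonneg _)
    (sub_add_cancel 1 t)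

theorem Bcone_eq_closedBall_coneSeminorm : Bcone = coneSeminorm.closedBall 0 1 := by
  refine Subset.antisymm (convexHull_min ?_ (coneSeminorm.convex_closedBall 0 1))
    closedBall_coneSeminorm_subset_Bcone
  rintro p (⟨hp, hp2⟩ | rfl | rfl) <;> simp_all [coneSeminorm_apply]

theorem gauge_Bcone : gauge Bcone = coneSeminorm := by
  rw [Bcone_eq_closedBall_coneSeminorm, Seminorm.gauge_closedBall_one]

theorem smul_wT_add_apply_zero (l : ℝ) (x : Fin 3 → ℝ) (i : Fin 3) :
    (l • wT i + x) 0 = x 0 + l / √3 * vT i 0 := by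
  simp only [wT, Pi.add_apply, Pi.smul_apply, smul_eq_mul, Matrix.cons_val_zero]
  ring

theorem smul_wT_add_apply_one (l : ℝ) (x : Fin 3 → ℝ) (i : Fin 3) :
    (l • wT i + x) 1 = x 1 + l / √3 * vT i 1 := by
  simp only [wT, Pi.add_apply, Pi.smul_apply, smul_eq_mul, Matrix.cons_val_one,
    Matrix.cons_val_zero]
  ring

theorem vT_apply_two (i : Fin 3) : vT i 2 = 0 := by
  fin_cases i <;> rfl

theorem smul_wT_add_apply_two (l : ℝ) (x : Fin 3 → ℝ) (i : Fin 3) :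
    (l • wT i + x) 2 = x 2 + (√3 - 1) * (l / √3) := by
  simp only [wT, Pi.add_apply, Pi.smul_apply, smul_eq_mul, vT_apply_two, Matrix.cons_val_two,
    Matrix.tail_cons, Matrix.head_cons]
  ring

theorem coneSeminorm_smul_wT_add (l : ℝ) (x : Fin 3 → ℝ) (i : Fin 3) :
    coneSeminorm (l • wT i + x) =
      √((x 0 + l / √3 * vT i 0) ^ 2 + (x 1 + l / √3 * vT i 1) ^ 2) +
        |x 2 + (√3 - 1) * (l / √3)| := by
  rw [coneSeminorm_apply, smul_wT_add_apply_zero, smul_wT_add_apply_one, smul_wT_add_apply_two]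

theorem eq_zero_of_forall_sq_dist_smul_vT_eq {a b c R : ℝ} (hc : c ≠ 0)
    (h : ∀ i, (a + c * vT i 0) ^ 2 + (b + c * vT i 1) ^ 2 = R) : a = 0 ∧ b = 0 := by
  have h3 : √3 ^ 2 = 3 := Real.sq_sqrt (by norm_num)
  have h0 := h 0
  have h1 := h 1
  have h2 := h 2
  simp only [vT, Matrix.cons_val_zero, Matrix.cons_val_one, Matrix.cons_val_two,
    Matrix.tail_cons, Matrix.head_cons] at h0 h1 h2
  have ha : a * (c * √3) = 0 := by linear_combination (h0 - h1) / 2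
  obtain rfl : a = 0 := by simpa [hc] using ha
  have hb : b * (3 * c) = 0 := by linear_combination h2 - h0 + c ^ 2 / 4 * h3
  exact ⟨rfl, by simpa [hc] using hb⟩

theorem add_abs_add_sqrt_three_sub_one_mul_ne_one {c z : ℝ} (hc : 0 < c) (hz : |z| = 1) :
    c + |z + (√3 - 1) * c| ≠ 1 := by
  have h3 : √3 ^ 2 = 3 := Real.sq_sqrt (by norm_num)
  have h1 : 1 < √3 := by rw [Real.lt_sqrt] <;> norm_num
  have h2 : √3 < 2 := by rw [Real.sqrt_lt'] <;> norm_num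
  intro h
  rcases (abs_eq zero_le_one).mp hz with rfl | rfl
  · rw [abs_of_pos (by nlinarith)] at h
    nlinarith
  · rcases abs_cases (-1 + (√3 - 1) * c) with ⟨habs, hsign⟩ | ⟨habs, hsign⟩ <;>
      rw [habs] at h <;> nlinarith

/-- No positive homothety `λ·S + x` of the tetrahedron `S = conv({0} ∪ T⋆)` is
inscribed in `B`, i.e. has all four vertices on the boundary of `B`. -/
theorem no_homothety_of_S_inscribed :
    ¬ ∃ (l : ℝ) (x : Fin 3 → ℝ), 0 < l ∧
      gauge Bcone (l • (0 : Fin 3 → ℝ) + x) = 1 ∧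
      (∀ i, gauge Bcone (l • wT i + x) = 1) := by
  rintro ⟨l, x, hl, h0, hw⟩
  have hc : 0 < l / √3 := by positivity
  simp only [smul_zero, zero_add, gauge_Bcone, coneSeminorm_apply] at h0
  simp only [gauge_Bcone, coneSeminorm_smul_wT_add] at hw
  have hequi : ∀ i, (x 0 + l / √3 * vT i 0) ^ 2 + (x 1 + l / √3 * vT i 1) ^ 2 =
      (1 - |x 2 + (√3 - 1) * (l / √3)|) ^ 2 := fun i => by
    rw [← eq_sub_of_add_eq (hw i), Real.sq_sqrt (by positivity)]
  obtain ⟨hx0, hx1⟩ := eq_zero_of_forall_sq_dist_smul_vT_eq hc.ne' hequi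
  have hz : |x 2| = 1 := by simpa [hx0, hx1] using h0
  have htop : l / √3 + |x 2 + (√3 - 1) * (l / √3)| = 1 := by
    simpa [hx0, hx1, vT, Real.sqrt_sq hc.le] using hw 2
  exact add_abs_add_sqrt_three_sub_one_mul_ne_one hc hz htop
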